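/- For any predicate over multiplicity valuations Q : ({1,ω} → Prop) expressible as a finite conjunction of inequalities of the form μ ≤ ∏ᵢ νᵢ (where each μ, νᵢ is either a constant in {1,ω} or a variable), and for any multiplicity variable π, there effectively exists a quantifier-free constraint Q' of the same form, not mentioning π, such that for all valuations θ of the remaining variables, Q' holds under θ if and only if Q holds under θ[π↦1] or Q holds under θ[π↦ω]. -/

import Mathlib

/-- The multiplicity set {1, ω}. -/
inductive M where
  | one : M
  | omega : M
deriving DecidableEq, Repr

/-- Multiplication: 1 is identity, ω is absorbing. -/
def M.mul : M → M → M
  | .one, m => m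
  | .omega, _ => .omega

/-- The order ≤: reflexive closure of 1 ≤ ω. -/
def M.le (m₁ m₂ : M) : Prop := m₁ = m₂ ∨ (m₁ = .one ∧ m₂ = .omega)

/-- A multiplicity atom: a variable or a constant. -/
inductive Atom where
  | var : ℕ → Atom
  | const : M → Atom
deriving DecidableEq

/-- Evaluate an atom under a valuation. -/
def evalAtom (θ : ℕ → M) : Atom → M
  | .var n => θ n
  | .const m => m

/-- Evaluate a product of atoms under a valuation. -/
def evalProd (θ : ℕ → M) (l : List Atom) : M :=
  (l.map (evalAtom θ)).foldr M.mul M.one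

/-- A predicate μ ≤ ∏ᵢ νᵢ. -/
structure MPred where
  lhs : Atom
  rhs : List Atom

/-- Truth of a predicate under a valuation. -/
def MPred.holds (θ : ℕ → M) (p : MPred) : Prop :=
  (evalAtom θ p.lhs).le (evalProd θ p.rhs)

/-- A constraint: a finite conjunction of predicates. -/
abbrev MConstr := List MPred

/-- Truth of a constraint under a valuation. -/
def MConstr.holds (Q : MConstr) (θ : ℕ → M) : Prop := ∀ p ∈ Q, p.holds θ

def Atom.mentions (π : ℕ) : Atom → Prop
  | .var n => n = π
  | .const _ => False

def MPred.mentions (π : ℕ) (p : MPred) : Prop :=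
  p.lhs.mentions π ∨ ∃ a ∈ p.rhs, a.mentions π

/-!
The elimination works like Fourier–Motzkin. Sort the predicates by where `π` occurs. Those of
the form `π ≤ π · ν` always hold, and those not mentioning `π` do not depend on it. A lower bound
`μ ≤ π · ν` holds at `π = ω` and reduces to `μ ≤ ν` at `π = 1`; an upper bound `π ≤ ν'` holds at
`π = 1` and reduces to `ω ≤ ν'` at `π = ω`. So the disjunction over `π` is the independent part
together with "all `μ ≤ ν`, or all `ω ≤ ν'`", i.e. `μ ≤ ν ∨ ω ≤ ν'` for every pair of a lower
and an upper bound; as `ω` is absorbing, that is the single predicate `μ ≤ ν · ν'`.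
-/

theorem forall_imp_forall_imp_or_iff {α β : Type*} {P R : α → Prop} {P' S : β → Prop} :
    (∀ a, P a → ∀ b, P' b → R a ∨ S b) ↔ (∀ a, P a → R a) ∨ ∀ b, P' b → S b := by
  constructor
  · intro h
    by_contra! ⟨⟨a, ha, hRa⟩, b, hb, hSb⟩
    exact (h a ha b hb).elim hRa hSb
  · rintro (h | h) a ha b hb
    exacts [Or.inl (h a ha), Or.inr (h b hb)]

namespace M

theorem one_le (m : M) : M.one.le m := by
  cases m <;> simp [M.le]

theorem le_omega (m : M) : m.le .omega := by
  cases m <;> simp [M.le]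

theorem le_mul_iff {μ s r : M} : μ.le (s.mul r) ↔ μ.le s ∨ M.omega.le r := by
  cases μ <;> cases s <;> cases r <;> simp [M.le, M.mul]

end M

section Evaluation

variable {θ : ℕ → M} {π : ℕ} {m : M}

theorem Atom.mentions_iff {a : Atom} : a.mentions π ↔ a = .var π := by
  cases a <;> simp [Atom.mentions]

theorem MPred.mentions_iff {p : MPred} :
    p.mentions π ↔ p.lhs = .var π ∨ .var π ∈ p.rhs := by
  simp [MPred.mentions, Atom.mentions_iff]

theorem evalAtom_update_self : evalAtom (Function.update θ π m) (.var π) = m := by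
  simp [evalAtom]

theorem evalAtom_update_of_ne {a : Atom} (h : a ≠ .var π) :
    evalAtom (Function.update θ π m) a = evalAtom θ a := by
  cases a with
  | var n => exact Function.update_of_ne (by rintro rfl; exact h rfl) _ _
  | const c => rfl

theorem evalProd_cons (a : Atom) (l : List Atom) :
    evalProd θ (a :: l) = (evalAtom θ a).mul (evalProd θ l) := rfl

theorem evalProd_append (l₁ l₂ : List Atom) :
    evalProd θ (l₁ ++ l₂) = (evalProd θ l₁).mul (evalProd θ l₂) := by
  induction l₁ with
  | nil => rfl
  | cons a l ih =>
    rw [List.cons_append, evalProd_cons, evalProd_cons, ih]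
    cases evalAtom θ a <;> rfl

theorem evalProd_eq_omega_of_mem {a : Atom} {l : List Atom} (ha : a ∈ l)
    (h : evalAtom θ a = .omega) : evalProd θ l = .omega := by
  induction l with
  | nil => simp at ha
  | cons b l ih =>
    rw [evalProd_cons]
    rcases List.mem_cons.mp ha with rfl | ha
    · rw [h]; rfl
    · rw [ih ha]; cases evalAtom θ b <;> rfl

theorem evalProd_update_of_not_mem {l : List Atom} (h : .var π ∉ l) :
    evalProd (Function.update θ π m) l = evalProd θ l := by
  induction l with
  | nil => rfl
  | cons a l ih =>
    rw [List.mem_cons, not_or] at h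
    rw [evalProd_cons, evalProd_cons, evalAtom_update_of_ne (Ne.symm h.1), ih h.2]

def dropVar (π : ℕ) (l : List Atom) : List Atom := l.filter (· ≠ .var π)

theorem not_mem_dropVar (l : List Atom) : .var π ∉ dropVar π l := by
  simp [dropVar]

theorem evalProd_update_one (l : List Atom) :
    evalProd (Function.update θ π .one) l = evalProd θ (dropVar π l) := by
  induction l with
  | nil => rfl
  | cons a l ih =>
    by_cases h : a = .var π
    · subst h
      rw [dropVar, List.filter_cons_of_neg (by simp), ← dropVar, evalProd_cons,
        evalAtom_update_self, ih]
      rfl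
    · rw [dropVar, List.filter_cons_of_pos (by simpa using h), ← dropVar, evalProd_cons,
        evalProd_cons, evalAtom_update_of_ne h, ih]

theorem MPred.holds_update_of_not_mentions {p : MPred} (h : ¬ p.mentions π) :
    p.holds (Function.update θ π m) ↔ p.holds θ := by
  rw [MPred.mentions_iff, not_or] at h
  rw [MPred.holds, MPred.holds, evalAtom_update_of_ne h.1, evalProd_update_of_not_mem h.2]

end Evaluation

namespace MConstr

variable {θ : ℕ → M} {π : ℕ}

def independent (Q : MConstr) (π : ℕ) : MConstr :=
  Q.filter fun p => p.lhs ≠ .var π ∧ .var π ∉ p.rhs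

def lower (Q : MConstr) (π : ℕ) : MConstr :=
  Q.filter fun p => p.lhs ≠ .var π ∧ .var π ∈ p.rhs

def upper (Q : MConstr) (π : ℕ) : MConstr :=
  Q.filter fun p => p.lhs = .var π ∧ .var π ∉ p.rhs

def resolve (π : ℕ) (c b : MPred) : MPred := ⟨c.lhs, dropVar π c.rhs ++ b.rhs⟩

def elimVar (Q : MConstr) (π : ℕ) : MConstr :=
  Q.independent π ++ (Q.lower π).flatMap fun c => (Q.upper π).map (resolve π c)

theorem mem_independent {Q : MConstr} {p : MPred} :
    p ∈ Q.independent π ↔ p ∈ Q ∧ ¬ p.mentions π := by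
  simp [independent, MPred.mentions_iff]

theorem mem_lower {Q : MConstr} {p : MPred} :
    p ∈ Q.lower π ↔ p ∈ Q ∧ p.lhs ≠ .var π ∧ .var π ∈ p.rhs := by
  simp [lower]

theorem mem_upper {Q : MConstr} {p : MPred} :
    p ∈ Q.upper π ↔ p ∈ Q ∧ p.lhs = .var π ∧ .var π ∉ p.rhs := by
  simp [upper]

theorem not_mentions_of_mem_elimVar {Q : MConstr} {p : MPred} (hp : p ∈ Q.elimVar π) :
    ¬ p.mentions π := by
  simp only [elimVar, List.mem_append, List.mem_flatMap, List.mem_map] at hp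
  rcases hp with hp | ⟨c, hc, b, hb, rfl⟩
  · exact (mem_independent.mp hp).2
  · rw [MPred.mentions_iff, not_or]
    refine ⟨(mem_lower.mp hc).2.1, ?_⟩
    rw [resolve, List.mem_append, not_or]
    exact ⟨not_mem_dropVar _, (mem_upper.mp hb).2.2⟩

theorem holds_resolve_iff {c b : MPred} :
    (resolve π c b).holds θ ↔
      (evalAtom θ c.lhs).le (evalProd θ (dropVar π c.rhs)) ∨ M.omega.le (evalProd θ b.rhs) := by
  rw [resolve, MPred.holds, evalProd_append, M.le_mul_iff]

theorem holds_elimVar_iff {Q : MConstr} :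
    (Q.elimVar π).holds θ ↔
      (Q.independent π).holds θ ∧ ∀ c ∈ Q.lower π, ∀ b ∈ Q.upper π, (resolve π c b).holds θ := by
  simp only [MConstr.holds, elimVar, List.mem_append, List.mem_flatMap, List.mem_map]
  constructor
  · intro h
    exact ⟨fun p hp => h p (.inl hp), fun c hc b hb => h _ (.inr ⟨c, hc, b, hb, rfl⟩)⟩
  · rintro ⟨hind, hres⟩ p (hp | ⟨c, hc, b, hb, rfl⟩)
    exacts [hind p hp, hres c hc b hb]

theorem holds_update_one_iff {Q : MConstr} :
    Q.holds (Function.update θ π .one) ↔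
      (Q.independent π).holds θ ∧
        ∀ c ∈ Q.lower π, (evalAtom θ c.lhs).le (evalProd θ (dropVar π c.rhs)) := by
  have hne {p : MPred} (hl : p.lhs ≠ .var π) : p.holds (Function.update θ π .one) ↔
      (evalAtom θ p.lhs).le (evalProd θ (dropVar π p.rhs)) := by
    rw [MPred.holds, evalAtom_update_of_ne hl, evalProd_update_one]
  constructor
  · intro h
    refine ⟨fun p hp => ?_, fun c hc => ?_⟩
    · obtain ⟨hpQ, hp⟩ := mem_independent.mp hp
      exact (MPred.holds_update_of_not_mentions hp).mp (h p hpQ)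
    · obtain ⟨hcQ, hl, -⟩ := mem_lower.mp hc
      exact (hne hl).mp (h c hcQ)
  · rintro ⟨hind, hlow⟩ p hp
    by_cases hl : p.lhs = .var π
    · rw [MPred.holds, hl, evalAtom_update_self]
      exact M.one_le _
    by_cases hr : .var π ∈ p.rhs
    · exact (hne hl).mpr (hlow p (mem_lower.mpr ⟨hp, hl, hr⟩))
    have hfree : ¬ p.mentions π := by simp [MPred.mentions_iff, hl, hr]
    exact (MPred.holds_update_of_not_mentions hfree).mpr
      (hind p (mem_independent.mpr ⟨hp, hfree⟩))

theorem holds_update_omega_iff {Q : MConstr} :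
    Q.holds (Function.update θ π .omega) ↔
      (Q.independent π).holds θ ∧ ∀ b ∈ Q.upper π, M.omega.le (evalProd θ b.rhs) := by
  have hup {p : MPred} (hl : p.lhs = .var π) (hr : .var π ∉ p.rhs) :
      p.holds (Function.update θ π .omega) ↔ M.omega.le (evalProd θ p.rhs) := by
    rw [MPred.holds, hl, evalAtom_update_self, evalProd_update_of_not_mem hr]
  constructor
  · intro h
    refine ⟨fun p hp => ?_, fun b hb => ?_⟩
    · obtain ⟨hpQ, hp⟩ := mem_independent.mp hp
      exact (MPred.holds_update_of_not_mentions hp).mp (h p hpQ)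
    · obtain ⟨hbQ, hl, hr⟩ := mem_upper.mp hb
      exact (hup hl hr).mp (h b hbQ)
  · rintro ⟨hind, hupper⟩ p hp
    by_cases hr : .var π ∈ p.rhs
    · rw [MPred.holds, evalProd_eq_omega_of_mem hr evalAtom_update_self]
      exact M.le_omega _
    by_cases hl : p.lhs = .var π
    · exact (hup hl hr).mpr (hupper p (mem_upper.mpr ⟨hp, hl, hr⟩))
    have hfree : ¬ p.mentions π := by simp [MPred.mentions_iff, hl, hr]
    exact (MPred.holds_update_of_not_mentions hfree).mpr
      (hind p (mem_independent.mpr ⟨hp, hfree⟩))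

end MConstr

theorem stmt5 : ∀ (Q : MConstr) (π : ℕ),
    ∃ Q' : MConstr, (∀ p ∈ Q', ¬ p.mentions π) ∧
      ∀ θ : ℕ → M, Q'.holds θ ↔
        (Q.holds (Function.update θ π M.one) ∨ Q.holds (Function.update θ π M.omega)) := by
  intro Q π
  refine ⟨Q.elimVar π, fun p hp => MConstr.not_mentions_of_mem_elimVar hp, fun θ => ?_⟩
  simp only [MConstr.holds_elimVar_iff, MConstr.holds_resolve_iff, MConstr.holds_update_one_iff,
    MConstr.holds_update_omega_iff, ← and_or_left, forall_imp_forall_imp_or_iff]
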